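/- For every nonnegative integer r, every f ∈ ℂ^N and every t > 0, the modulus of smoothness is bounded by the K-functional: ω_r(f, t) ≤ 2^r · K_r(f, t). -/

import Mathlib

/-!
In the eigenbasis `T_s - I` acts by the multipliers `e^{i s √λ_j} - 1`, whose modulus is at most
`2` and at most `|s| √λ_j`. Splitting `f = (f - g) + g`, the first bound gives
`‖(T_s - I)^r (f - g)‖ ≤ 2^r ‖f - g‖` and the second `‖(T_s - I)^r g‖ ≤ t^r ‖L^{r/2} g‖`
for `|s| ≤ t`; since `t^r = 2^r (t/2)^r`, taking the infimum over `g` gives the claim.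
-/

open Matrix

noncomputable section

/-- Euclidean (2-)norm on `ℂ^N`. -/
def cnorm2 {N : ℕ} (f : Fin N → ℂ) : ℝ := Real.sqrt (∑ i, ‖f i‖ ^ 2)

/-- The spectral operator `Σ_j c_j u_j u_j^*`. -/
def specOp {N : ℕ} (u : Fin N → Fin N → ℂ) (c : Fin N → ℂ) : Matrix (Fin N) (Fin N) ℂ :=
  ∑ j, c j • Matrix.vecMulVec (u j) (star (u j))

/-- The graph translation operator `T_s = Σ_j e^{i s √λ_j} u_j u_j^*`. -/
def Tmat {N : ℕ} (u : Fin N → Fin N → ℂ) (lam : Fin N → ℝ) (s : ℝ) :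
    Matrix (Fin N) (Fin N) ℂ :=
  specOp u (fun j => Complex.exp (Complex.I * (s : ℂ) * (Real.sqrt (lam j) : ℂ)))

/-- The `r`-th modulus of smoothness `ω_r(f,t) = sup_{|s| ≤ t} ‖(T_s - I)^r f‖₂`. -/
def omegaMod {N : ℕ} (u : Fin N → Fin N → ℂ) (lam : Fin N → ℝ) (r : ℕ) (f : Fin N → ℂ)
    (t : ℝ) : ℝ :=
  ⨆ s : {s : ℝ // |s| ≤ t}, cnorm2 (((Tmat u lam s.1 - 1) ^ r).mulVec f)

/-- Functional calculus power `L^x = Σ_j λ_j^x u_j u_j^*` (with `0^0 = 1`). -/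
def Lpow {N : ℕ} (u : Fin N → Fin N → ℂ) (lam : Fin N → ℝ) (x : ℝ) :
    Matrix (Fin N) (Fin N) ℂ :=
  specOp u (fun j => ((lam j ^ x : ℝ) : ℂ))

/-- The `K`-functional `K_r(f,t) = inf_g ( ‖f-g‖₂ + (t/2)^r ‖L^{r/2} g‖₂ )`. -/
def Kfun {N : ℕ} (u : Fin N → Fin N → ℂ) (lam : Fin N → ℝ) (r : ℕ) (f : Fin N → ℂ)
    (t : ℝ) : ℝ :=
  ⨅ g : Fin N → ℂ, (cnorm2 (f - g) + (t / 2) ^ r * cnorm2 ((Lpow u lam ((r : ℝ) / 2)).mulVec g))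

section SpectralOperator

variable {N : ℕ} {u : Fin N → Fin N → ℂ}

lemma cnorm2_eq_norm_toLp (v : Fin N → ℂ) : cnorm2 v = ‖WithLp.toLp 2 v‖ := by
  rw [EuclideanSpace.norm_eq]
  rfl

lemma cnorm2_add_le (v w : Fin N → ℂ) : cnorm2 (v + w) ≤ cnorm2 v + cnorm2 w := by
  simpa only [cnorm2_eq_norm_toLp, WithLp.toLp_add] using norm_add_le _ _

lemma cnorm2_le_mul_of_norm_le {v w : Fin N → ℂ} {C : ℝ} (hC : 0 ≤ C)
    (h : ∀ i, ‖v i‖ ≤ C * ‖w i‖) : cnorm2 v ≤ C * cnorm2 w := by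
  rw [cnorm2, cnorm2, ← Real.sqrt_sq hC, ← Real.sqrt_mul (sq_nonneg C), Finset.mul_sum]
  refine Real.sqrt_le_sqrt (Finset.sum_le_sum fun i _ => ?_)
  rw [← mul_pow]
  exact pow_le_pow_left₀ (norm_nonneg _) (h i) 2

lemma cnorm2_mulVec_of_mem_unitaryGroup {U : Matrix (Fin N) (Fin N) ℂ}
    (hU : U ∈ unitaryGroup (Fin N) ℂ) (v : Fin N → ℂ) : cnorm2 (U *ᵥ v) = cnorm2 v := by
  rw [cnorm2_eq_norm_toLp, cnorm2_eq_norm_toLp, ← toEuclideanCLM_toLp]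
  exact ContinuousLinearMap.norm_map_of_mem_unitary (Unitary.map_mem toEuclideanCLM hU) _

lemma specOp_eq_mul_diagonal_mul (c : Fin N → ℂ) :
    specOp u c = (of u)ᵀ * diagonal c * star (of u)ᵀ := by
  ext a b
  simp only [specOp, Matrix.sum_apply, Matrix.smul_apply, vecMulVec_apply, Pi.star_apply,
    RCLike.star_def, smul_eq_mul, Matrix.mul_apply, transpose_apply, of_apply, diagonal_apply,
    mul_ite, mul_zero, Finset.sum_ite_eq', Finset.mem_univ, ↓reduceIte, star_apply]
  exact Finset.sum_congr rfl fun j _ => by ring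

lemma of_transpose_mem_unitaryGroup
    (hu : ∀ i j, star (u i) ⬝ᵥ u j = if i = j then 1 else 0) :
    (of u)ᵀ ∈ unitaryGroup (Fin N) ℂ := by
  rw [mem_unitaryGroup_iff']
  ext i j
  simpa [Matrix.mul_apply, dotProduct, one_apply] using hu i j

def specOpAlgHom (hu : ∀ i j, star (u i) ⬝ᵥ u j = if i = j then 1 else 0) :
    (Fin N → ℂ) →ₐ[ℂ] Matrix (Fin N) (Fin N) ℂ :=
  (Unitary.conjStarAlgAut ℂ _ ⟨_, of_transpose_mem_unitaryGroup hu⟩).toAlgEquiv.toAlgHom.comp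
    (diagonalAlgHom ℂ)

lemma specOpAlgHom_apply (hu : ∀ i j, star (u i) ⬝ᵥ u j = if i = j then 1 else 0)
    (c : Fin N → ℂ) : specOpAlgHom hu c = specOp u c := by
  simp [specOpAlgHom, specOp_eq_mul_diagonal_mul]

lemma cnorm2_specOp_mulVec (hu : ∀ i j, star (u i) ⬝ᵥ u j = if i = j then 1 else 0)
    (c v : Fin N → ℂ) :
    cnorm2 (specOp u c *ᵥ v) = cnorm2 (c * (star (of u)ᵀ *ᵥ v)) := by
  have hU := of_transpose_mem_unitaryGroup hu
  rw [specOp_eq_mul_diagonal_mul, ← mulVec_mulVec, ← mulVec_mulVec,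
    cnorm2_mulVec_of_mem_unitaryGroup hU]
  congr 1
  ext i
  exact mulVec_diagonal _ _ _

lemma cnorm2_specOp_mulVec_le (hu : ∀ i j, star (u i) ⬝ᵥ u j = if i = j then 1 else 0)
    {c d : Fin N → ℂ} {C : ℝ} (hC : 0 ≤ C)
    (h : ∀ j, ‖c j‖ ≤ C * ‖d j‖) (v : Fin N → ℂ) :
    cnorm2 (specOp u c *ᵥ v) ≤ C * cnorm2 (specOp u d *ᵥ v) := by
  rw [cnorm2_specOp_mulVec hu, cnorm2_specOp_mulVec hu]
  refine cnorm2_le_mul_of_norm_le hC fun j => ?_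
  simp only [Pi.mul_apply, norm_mul, ← mul_assoc]
  exact mul_le_mul_of_nonneg_right (h j) (norm_nonneg _)

lemma cnorm2_specOp_mulVec_le_self (hu : ∀ i j, star (u i) ⬝ᵥ u j = if i = j then 1 else 0)
    {c : Fin N → ℂ} {C : ℝ} (hC : 0 ≤ C) (h : ∀ j, ‖c j‖ ≤ C)
    (v : Fin N → ℂ) : cnorm2 (specOp u c *ᵥ v) ≤ C * cnorm2 v := by
  simpa [← specOpAlgHom_apply hu] using
    cnorm2_specOp_mulVec_le hu hC (d := 1) (fun j => by simpa using h j) v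

end SpectralOperator

lemma norm_exp_I_mul_ofReal_sub_one_le_two (θ : ℝ) : ‖Complex.exp (Complex.I * θ) - 1‖ ≤ 2 := by
  calc ‖Complex.exp (Complex.I * θ) - 1‖ ≤ ‖Complex.exp (θ * Complex.I)‖ + ‖(1 : ℂ)‖ := by
        rw [mul_comm]; exact norm_sub_le _ _
    _ = 2 := by rw [Complex.norm_exp_ofReal_mul_I, norm_one]; norm_num

lemma norm_exp_I_mul_sqrt_sub_one_pow_le {lam s t : ℝ} (hlam : 0 ≤ lam) (hs : |s| ≤ t)
    (r : ℕ) :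
    ‖(Complex.exp (Complex.I * s * Real.sqrt lam) - 1) ^ r‖ ≤
      t ^ r * ‖((lam ^ ((r : ℝ) / 2) : ℝ) : ℂ)‖ := by
  have hsqrt : Real.sqrt lam ^ r = lam ^ ((r : ℝ) / 2) := by
    rw [Real.sqrt_eq_rpow, ← Real.rpow_natCast, ← Real.rpow_mul hlam]
    ring_nf
  rw [norm_pow, Complex.norm_real, Real.norm_of_nonneg (by positivity), ← hsqrt, ← mul_pow]
  refine pow_le_pow_left₀ (norm_nonneg _) ?_ r
  calc ‖Complex.exp (Complex.I * s * Real.sqrt lam) - 1‖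
      ≤ ‖s * Real.sqrt lam‖ := by
        rw [mul_assoc, ← Complex.ofReal_mul]; exact Real.norm_exp_I_mul_ofReal_sub_one_le
    _ ≤ t * Real.sqrt lam := by
        rw [norm_mul, Real.norm_eq_abs, Real.norm_of_nonneg (Real.sqrt_nonneg _)]
        exact mul_le_mul_of_nonneg_right hs (Real.sqrt_nonneg _)

lemma cnorm2_Tmat_sub_one_pow_mulVec_le {N : ℕ} {u : Fin N → Fin N → ℂ}
    (hu : ∀ i j, star (u i) ⬝ᵥ u j = if i = j then 1 else 0) {lam : Fin N → ℝ}
    (hlam : ∀ j, 0 ≤ lam j) {s t : ℝ} (hs : |s| ≤ t) (r : ℕ) (f g : Fin N → ℂ) :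
    cnorm2 ((Tmat u lam s - 1) ^ r *ᵥ f) ≤
      2 ^ r * (cnorm2 (f - g) + (t / 2) ^ r * cnorm2 (Lpow u lam ((r : ℝ) / 2) *ᵥ g)) := by
  set e : Fin N → ℂ := fun j => (Complex.exp (Complex.I * s * Real.sqrt (lam j)) - 1) ^ r
  have hT : (Tmat u lam s - 1) ^ r = specOp u e := by
    simp only [Tmat, ← specOpAlgHom_apply hu, ← map_one (specOpAlgHom hu), ← map_sub, ← map_pow]
    rfl
  have hfg : cnorm2 (specOp u e *ᵥ (f - g)) ≤ 2 ^ r * cnorm2 (f - g) := by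
    refine cnorm2_specOp_mulVec_le_self hu (by positivity) (fun j => ?_) _
    rw [norm_pow, mul_assoc, ← Complex.ofReal_mul]
    exact pow_le_pow_left₀ (norm_nonneg _) (norm_exp_I_mul_ofReal_sub_one_le_two _) r
  have hg : cnorm2 (specOp u e *ᵥ g) ≤ t ^ r * cnorm2 (Lpow u lam ((r : ℝ) / 2) *ᵥ g) :=
    cnorm2_specOp_mulVec_le hu (pow_nonneg ((abs_nonneg s).trans hs) r)
      (fun j => norm_exp_I_mul_sqrt_sub_one_pow_le (hlam j) hs r) g
  calc cnorm2 ((Tmat u lam s - 1) ^ r *ᵥ f)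
      = cnorm2 (specOp u e *ᵥ (f - g) + specOp u e *ᵥ g) := by
        rw [hT, ← mulVec_add, sub_add_cancel]
    _ ≤ 2 ^ r * cnorm2 (f - g) + t ^ r * cnorm2 (Lpow u lam ((r : ℝ) / 2) *ᵥ g) :=
        (cnorm2_add_le _ _).trans (add_le_add hfg hg)
    _ = 2 ^ r * (cnorm2 (f - g) + (t / 2) ^ r * cnorm2 (Lpow u lam ((r : ℝ) / 2) *ᵥ g)) := by
        rw [mul_add, ← mul_assoc, ← mul_pow, mul_div_cancel₀ t two_ne_zero]

/-- For every nonnegative integer `r`, every `f ∈ ℂ^N` and every `t > 0`,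
`ω_r(f, t) ≤ 2^r · K_r(f, t)`. -/
theorem stmt5
    (N : ℕ) (hN : 2 ≤ N)
    (u : Fin N → Fin N → ℂ)
    (hu : ∀ i j, star (u i) ⬝ᵥ u j = if i = j then 1 else 0)
    (lam : Fin N → ℝ) (hmono : Monotone lam)
    (hlam0 : lam ⟨0, by omega⟩ = 0)
    (r : ℕ) (f : Fin N → ℂ) (t : ℝ) (ht : 0 < t) :
    omegaMod u lam r f t ≤ 2 ^ r * Kfun u lam r f t := by
  have hlam : ∀ j, 0 ≤ lam j := fun j => hlam0 ▸ hmono (Nat.zero_le j.val)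
  have : Nonempty {s : ℝ // |s| ≤ t} := ⟨⟨0, by simpa using ht.le⟩⟩
  refine ciSup_le fun ⟨s, hs⟩ => ?_
  rw [← div_le_iff₀' (by positivity)]
  exact le_ciInf fun g => (div_le_iff₀' (by positivity)).2
    (cnorm2_Tmat_sub_one_pow_mulVec_le hu hlam hs r f g)
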